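/- The Thales metric, given at (x,y) ∈ ℝ² by the bilinear form with components g_{11} = (1 + y²)/(1 + x² + y²)², g_{12} = g_{21} = −xy/(1 + x² + y²)², g_{22} = (1 + x²)/(1 + x² + y²)², is a smooth Riemannian metric defined on all of ℝ² (it is positive definite at every point), and its Gaussian curvature K is identically equal to 1. -/

import Mathlib

noncomputable section

/-- The plane ℝ², as `Fin 2 → ℝ`. -/
abbrev E2 : Type := Fin 2 → ℝ

/-- The standard basis vectors of ℝ². -/
def bas (a : Fin 2) : E2 := Pi.single a 1

/-- Partial derivative ∂ₐ of a scalar function on ℝ². -/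
def pd (a : Fin 2) (f : E2 → ℝ) (x : E2) : ℝ := fderiv ℝ f x (bas a)

/-- Components Γ_{ab}{}^c of a Christoffel map Γ : ℝ² → (ℝ² →ₗ ℝ² →ₗ ℝ²). -/
def chr (Γ : E2 → (E2 →ₗ[ℝ] E2 →ₗ[ℝ] E2)) (a b c : Fin 2) (x : E2) : ℝ :=
  Γ x (bas a) (bas b) c

/-- Ricci tensor components built from Christoffel components `Γc a b c` (= Γ_{ab}{}^c):
`R_{ad} = ∂_cΓ_{ad}{}^c − ∂_aΓ_{cd}{}^c + Γ_{cb}{}^cΓ_{ad}{}^b − Γ_{ab}{}^cΓ_{cd}{}^b`. -/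
def ricciC (Γc : Fin 2 → Fin 2 → Fin 2 → E2 → ℝ) (a d : Fin 2) (x : E2) : ℝ :=
  (∑ c, pd c (Γc a d c) x) - (∑ c, pd a (Γc c d c) x)
  + (∑ b, ∑ c, Γc c b c x * Γc a d b x)
  - (∑ b, ∑ c, Γc a b c x * Γc c d b x)

/-- Covariant derivative of the Ricci tensor:
`∇_aR_{bc} = ∂_aR_{bc} − Γ_{ab}{}^dR_{dc} − Γ_{ac}{}^dR_{bd}`. -/
def covRicciC (Γc : Fin 2 → Fin 2 → Fin 2 → E2 → ℝ) (a b c : Fin 2) (x : E2) : ℝ :=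
  pd a (ricciC Γc b c) x - (∑ d, Γc a b d x * ricciC Γc d c x)
    - (∑ d, Γc a c d x * ricciC Γc b d x)

/-- `Y_{abc} = ∇_aR_{bc} − ∇_bR_{ac}`. -/
def YC (Γc : Fin 2 → Fin 2 → Fin 2 → E2 → ℝ) (a b c : Fin 2) (x : E2) : ℝ :=
  covRicciC Γc a b c x - covRicciC Γc b a c x

/-- Levi-Civita Christoffel symbols of a metric `g` (matrix-valued map):
`Γ_{ab}{}^c = ½ g^{cd}(∂_a g_{bd} + ∂_b g_{ad} − ∂_d g_{ab})`. -/
def chrLC (g : E2 → Matrix (Fin 2) (Fin 2) ℝ) (a b c : Fin 2) (x : E2) : ℝ :=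
  (1/2) * ∑ d, (g x)⁻¹ c d *
    (pd a (fun y => g y b d) x + pd b (fun y => g y a d) x - pd d (fun y => g y a b) x)

/-- Gaussian curvature `K = ½ g^{ab} R_{ab}` of a metric on an open subset of ℝ². -/
def gauss (g : E2 → Matrix (Fin 2) (Fin 2) ℝ) (x : E2) : ℝ :=
  (1/2) * ∑ a, ∑ b, (g x)⁻¹ a b * ricciC (chrLC g) a b x

/-- The Thales metric `((1+y²)dx² − 2xy dx dy + (1+x²)dy²)/(1+x²+y²)²` on ℝ². -/
def thales : E2 → Matrix (Fin 2) (Fin 2) ℝ := fun z =>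
  let x := z 0
  let y := z 1
  Matrix.of
    ![![(1 + y^2) / (1 + x^2 + y^2)^2, -(x*y) / (1 + x^2 + y^2)^2],
      ![-(x*y) / (1 + x^2 + y^2)^2, (1 + x^2) / (1 + x^2 + y^2)^2]]

-- Auxiliary material
def proj2 (i : Fin 2) : E2 →L[ℝ] ℝ := ContinuousLinearMap.proj i

def Lc (f0 f1 : ℝ) : E2 →L[ℝ] ℝ := f0 • proj2 0 + f1 • proj2 1

lemma Lc_apply (f0 f1 : ℝ) (v : E2) : Lc f0 f1 v = f0 * v 0 + f1 * v 1 := rfl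

def HasPD (f : E2 → ℝ) (f0 f1 : ℝ) (z : E2) : Prop := HasFDerivAt f (Lc f0 f1) z

lemma HasPD.pd0 {f f0 f1 z} (h : HasPD f f0 f1 z) : pd 0 f z = f0 := by
  rw [pd, HasFDerivAt.fderiv h, Lc_apply]; simp [bas]
lemma HasPD.pd1 {f f0 f1 z} (h : HasPD f f0 f1 z) : pd 1 f z = f1 := by
  rw [pd, HasFDerivAt.fderiv h, Lc_apply]; simp [bas]

lemma hasPD_const (c : ℝ) (z : E2) : HasPD (fun _ => c) 0 0 z := by
  have h : Lc 0 0 = 0 := by ext v; simp [Lc_apply]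
  rw [HasPD, h]; exact hasFDerivAt_const c z

lemma hasPD_X (z : E2) : HasPD (fun w => w 0) 1 0 z := by
  have h : Lc 1 0 = proj2 0 := by ext v; simp [Lc_apply, proj2]
  rw [HasPD, h]; exact (proj2 0).hasFDerivAt

lemma hasPD_Y (z : E2) : HasPD (fun w => w 1) 0 1 z := by
  have h : Lc 0 1 = proj2 1 := by ext v; simp [Lc_apply, proj2]
  rw [HasPD, h]; exact (proj2 1).hasFDerivAt

lemma HasPD.add {f g f0 f1 g0 g1 z} (hf : HasPD f f0 f1 z) (hg : HasPD g g0 g1 z) :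
    HasPD (fun w => f w + g w) (f0 + g0) (f1 + g1) z := by
  have h : Lc (f0 + g0) (f1 + g1) = Lc f0 f1 + Lc g0 g1 := by
    ext v; simp [Lc_apply]; ring
  rw [HasPD, h]; exact HasFDerivAt.add hf hg

lemma HasPD.neg {f f0 f1 z} (hf : HasPD f f0 f1 z) : HasPD (fun w => -f w) (-f0) (-f1) z := by
  have h : Lc (-f0) (-f1) = -Lc f0 f1 := by ext v; simp [Lc_apply]; ring
  rw [HasPD, h]; exact HasFDerivAt.neg hf

lemma HasPD.sub {f g f0 f1 g0 g1 z} (hf : HasPD f f0 f1 z) (hg : HasPD g g0 g1 z) :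
    HasPD (fun w => f w - g w) (f0 - g0) (f1 - g1) z := by
  have h : Lc (f0 - g0) (f1 - g1) = Lc f0 f1 - Lc g0 g1 := by
    ext v; simp [Lc_apply]; ring
  rw [HasPD, h]; exact HasFDerivAt.sub hf hg

lemma HasPD.mul {f g f0 f1 g0 g1 z} (hf : HasPD f f0 f1 z) (hg : HasPD g g0 g1 z) :
    HasPD (fun w => f w * g w) (f z * g0 + g z * f0) (f z * g1 + g z * f1) z := by
  have h : Lc (f z * g0 + g z * f0) (f z * g1 + g z * f1)
      = f z • Lc g0 g1 + g z • Lc f0 f1 := by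
    ext v; simp [Lc_apply]; ring
  rw [HasPD, h]; exact HasFDerivAt.mul hf hg

lemma HasPD.congr_coeff {f f0 f1 g0 g1 z} (hf : HasPD f f0 f1 z) (h0 : f0 = g0) (h1 : f1 = g1) :
    HasPD f g0 g1 z := by rw [← h0, ← h1]; exact hf

lemma HasPD.congr_fun' {f g f0 f1 z} (hf : HasPD f f0 f1 z) (h : ∀ w, g w = f w) :
    HasPD g f0 f1 z := by
  have hg : g = f := funext h
  rw [hg]; exact hf

lemma HasPD.inv {g g0 g1 z} (hg : HasPD g g0 g1 z) (hgz : g z ≠ 0) :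
    HasPD (fun w => (g w)⁻¹) (-(g0 / g z ^ 2)) (-(g1 / g z ^ 2)) z := by
  have hinv := hasFDerivAt_inv' (𝕜 := ℝ) (R := ℝ) hgz
  have h2 : HasFDerivAt (fun w => (g w)⁻¹)
      ((-ContinuousLinearMap.mulLeftRight ℝ ℝ (g z)⁻¹ (g z)⁻¹).comp (Lc g0 g1)) z :=
    HasFDerivAt.comp z hinv hg
  have h : Lc (-(g0 / g z ^ 2)) (-(g1 / g z ^ 2))
      = (-ContinuousLinearMap.mulLeftRight ℝ ℝ (g z)⁻¹ (g z)⁻¹).comp (Lc g0 g1) := by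
    ext v
    simp [Lc_apply, ContinuousLinearMap.comp_apply, ContinuousLinearMap.mulLeftRight_apply]
    field_simp; ring
  rw [HasPD, h]; exact h2

lemma HasPD.div {f g f0 f1 g0 g1 z} (hf : HasPD f f0 f1 z) (hg : HasPD g g0 g1 z)
    (hgz : g z ≠ 0) :
    HasPD (fun w => f w / g w) ((f0 * g z - f z * g0) / g z ^ 2)
      ((f1 * g z - f z * g1) / g z ^ 2) z := by
  have h2 := hf.mul (HasPD.inv hg hgz)
  have h : HasPD (fun w => f w / g w)
      (f z * -(g0 / g z ^ 2) + (g z)⁻¹ * f0) (f z * -(g1 / g z ^ 2) + (g z)⁻¹ * f1) z :=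
    HasPD.congr_fun' h2 (fun w => div_eq_mul_inv (f w) (g w))
  exact h.congr_coeff (by field_simp; try ring) (by field_simp; try ring)




-- ============ basic facts ============
def Dd (z : E2) : ℝ := 1 + z 0 ^ 2 + z 1 ^ 2

lemma Dd_pos (z : E2) : 0 < Dd z := by unfold Dd; positivity
lemma Dd_ne (z : E2) : Dd z ≠ 0 := (Dd_pos z).ne'

lemma thales00 (z : E2) : thales z 0 0 = (1 + z 1 ^ 2) / Dd z ^ 2 := rfl
lemma thales01 (z : E2) : thales z 0 1 = -(z 0 * z 1) / Dd z ^ 2 := rfl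
lemma thales10 (z : E2) : thales z 1 0 = -(z 0 * z 1) / Dd z ^ 2 := rfl
lemma thales11 (z : E2) : thales z 1 1 = (1 + z 0 ^ 2) / Dd z ^ 2 := rfl

lemma hasPD_D (z : E2) : HasPD (fun w => Dd w) (2 * z 0) (2 * z 1) z := by
  have h := ((hasPD_const 1 z).add ((hasPD_X z).mul (hasPD_X z))).add
    ((hasPD_Y z).mul (hasPD_Y z))
  exact (h.congr_coeff (by ring) (by ring)).congr_fun' (fun w => by unfold Dd; ring)

lemma hasPD_D2 (z : E2) : HasPD (fun w => Dd w ^ 2) (4 * z 0 * Dd z) (4 * z 1 * Dd z) z := by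
  have h := (hasPD_D z).mul (hasPD_D z)
  exact (h.congr_coeff (by ring) (by ring)).congr_fun' (fun w => by ring)

-- partial derivatives of the metric entries
lemma hasPD_g00 (z : E2) : HasPD (fun w => thales w 0 0)
    (-4 * z 0 * (1 + z 1 ^ 2) / Dd z ^ 3) (2 * z 1 * (z 0 ^ 2 - z 1 ^ 2 - 1) / Dd z ^ 3) z := by
  have hnum := (hasPD_const 1 z).add ((hasPD_Y z).mul (hasPD_Y z))
  have h := hnum.div (hasPD_D2 z) (pow_ne_zero 2 (Dd_ne z))
  refine (h.congr_coeff ?_ ?_).congr_fun' (fun w => by rw [thales00]; try ring) <;>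
    · have := Dd_ne z; field_simp; unfold Dd; ring

lemma hasPD_g01 (z : E2) : HasPD (fun w => thales w 0 1)
    (z 1 * (3 * z 0 ^ 2 - z 1 ^ 2 - 1) / Dd z ^ 3)
    (z 0 * (3 * z 1 ^ 2 - z 0 ^ 2 - 1) / Dd z ^ 3) z := by
  have hnum := ((hasPD_X z).mul (hasPD_Y z)).neg
  have h := hnum.div (hasPD_D2 z) (pow_ne_zero 2 (Dd_ne z))
  refine (h.congr_coeff ?_ ?_).congr_fun' (fun w => by rw [thales01]; try ring) <;>
    · have := Dd_ne z; field_simp; unfold Dd; ring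

lemma hasPD_g10 (z : E2) : HasPD (fun w => thales w 1 0)
    (z 1 * (3 * z 0 ^ 2 - z 1 ^ 2 - 1) / Dd z ^ 3)
    (z 0 * (3 * z 1 ^ 2 - z 0 ^ 2 - 1) / Dd z ^ 3) z :=
  (hasPD_g01 z).congr_fun' (fun w => by rw [thales10, thales01])

lemma hasPD_g11 (z : E2) : HasPD (fun w => thales w 1 1)
    (2 * z 0 * (z 1 ^ 2 - z 0 ^ 2 - 1) / Dd z ^ 3) (-4 * z 1 * (1 + z 0 ^ 2) / Dd z ^ 3) z := by
  have hnum := (hasPD_const 1 z).add ((hasPD_X z).mul (hasPD_X z))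
  have h := hnum.div (hasPD_D2 z) (pow_ne_zero 2 (Dd_ne z))
  refine (h.congr_coeff ?_ ?_).congr_fun' (fun w => by rw [thales11]; try ring) <;>
    · have := Dd_ne z; field_simp; unfold Dd; ring

-- inverse of the metric
lemma thales_inv (z : E2) : (thales z)⁻¹ =
    Matrix.of ![![(1 + z 0 ^ 2) * Dd z, z 0 * z 1 * Dd z],
                 ![z 0 * z 1 * Dd z, (1 + z 1 ^ 2) * Dd z]] := by
  apply Matrix.inv_eq_right_inv
  ext i j
  fin_cases i <;> fin_cases j <;>
    · simp [Matrix.mul_apply, Fin.sum_univ_two, Matrix.one_apply, thales00, thales01,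
        thales10, thales11]
      have := Dd_ne z
      field_simp
      unfold Dd
      ring

-- ============ Christoffel symbols ============
def nA (z : E2) : ℝ := -(z 0 / Dd z)
def nB (z : E2) : ℝ := -(z 1 / Dd z)

def Γe : Fin 2 → Fin 2 → Fin 2 → E2 → ℝ :=
  ![![![fun z => 2 * nA z, fun _ => 0], ![nB, nA]],
    ![![nB, nA], ![fun _ => 0, fun z => 2 * nB z]]]

lemma hasPD_nA (z : E2) : HasPD nA ((z 0 ^ 2 - z 1 ^ 2 - 1) / Dd z ^ 2)
    (2 * z 0 * z 1 / Dd z ^ 2) z := by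
  have h := ((hasPD_X z).div (hasPD_D z) (Dd_ne z)).neg
  refine (h.congr_coeff ?_ ?_).congr_fun' (fun w => by unfold nA; try ring) <;>
    · have := Dd_ne z; field_simp; (try unfold Dd); ring

lemma hasPD_nB (z : E2) : HasPD nB (2 * z 0 * z 1 / Dd z ^ 2)
    ((z 1 ^ 2 - z 0 ^ 2 - 1) / Dd z ^ 2) z := by
  have h := ((hasPD_Y z).div (hasPD_D z) (Dd_ne z)).neg
  refine (h.congr_coeff ?_ ?_).congr_fun' (fun w => by unfold nB; try ring) <;>
    · have := Dd_ne z; field_simp; (try unfold Dd); ring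

lemma hasPD_2nA (z : E2) : HasPD (fun w => 2 * nA w) (2 * (z 0 ^ 2 - z 1 ^ 2 - 1) / Dd z ^ 2)
    (4 * z 0 * z 1 / Dd z ^ 2) z := by
  have h := (hasPD_const 2 z).mul (hasPD_nA z)
  exact h.congr_coeff (by field_simp; try ring) (by field_simp; try ring)

lemma hasPD_2nB (z : E2) : HasPD (fun w => 2 * nB w) (4 * z 0 * z 1 / Dd z ^ 2)
    (2 * (z 1 ^ 2 - z 0 ^ 2 - 1) / Dd z ^ 2) z := by
  have h := (hasPD_const 2 z).mul (hasPD_nB z)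
  exact h.congr_coeff (by field_simp; try ring) (by field_simp; try ring)

lemma pd_zero (a : Fin 2) (z : E2) : pd a (fun _ : E2 => (0:ℝ)) z = 0 := by
  fin_cases a
  · exact (hasPD_const 0 z).pd0
  · exact (hasPD_const 0 z).pd1

lemma chrLC_eq : ∀ a b c : Fin 2, chrLC thales a b c = Γe a b c := by
  simp only [Fin.forall_fin_two]
  refine ⟨⟨⟨?_, ?_⟩, ⟨?_, ?_⟩⟩, ⟨⟨?_, ?_⟩, ⟨?_, ?_⟩⟩⟩ <;>
  · funext z
    have := Dd_ne z
    simp only [chrLC, Fin.sum_univ_two, thales_inv, Matrix.of_apply, Matrix.cons_val',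
      Matrix.cons_val_zero, Matrix.cons_val_one, Matrix.head_cons, Matrix.head_fin_const,
      Fin.isValue, (hasPD_g00 z).pd0, (hasPD_g00 z).pd1, (hasPD_g01 z).pd0, (hasPD_g01 z).pd1,
      (hasPD_g10 z).pd0, (hasPD_g10 z).pd1, (hasPD_g11 z).pd0, (hasPD_g11 z).pd1]
    simp only [Γe, Matrix.cons_val_zero, Matrix.cons_val_one, Matrix.head_cons, nA, nB]
    field_simp
    (try unfold Dd); ring

lemma ricci_eq : ∀ (a b : Fin 2) (z : E2), ricciC (chrLC thales) a b z = thales z a b := by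
  simp only [Fin.forall_fin_two]
  refine ⟨⟨?_, ?_⟩, ⟨?_, ?_⟩⟩ <;>
  · intro z
    have := Dd_ne z
    simp only [ricciC, Fin.sum_univ_two, chrLC_eq, Γe, Matrix.cons_val', Matrix.cons_val_zero,
      Matrix.cons_val_one, Matrix.head_cons, Matrix.head_fin_const, Fin.isValue,
      (hasPD_nA z).pd0, (hasPD_nA z).pd1, (hasPD_nB z).pd0, (hasPD_nB z).pd1,
      (hasPD_2nA z).pd0, (hasPD_2nA z).pd1, (hasPD_2nB z).pd0, (hasPD_2nB z).pd1,
      pd_zero]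
    simp only [thales00, thales01, thales10, thales11, nA, nB]
    field_simp
    (try unfold Dd); ring

lemma gauss_eq_one (z : E2) : gauss thales z = 1 := by
  have := Dd_ne z
  simp only [gauss, Fin.sum_univ_two, ricci_eq, thales_inv, Matrix.of_apply, Matrix.cons_val',
    Matrix.cons_val_zero, Matrix.cons_val_one, Matrix.head_cons, Matrix.head_fin_const,
    Fin.isValue, thales00, thales01, thales10, thales11]
  field_simp
  (try unfold Dd); ring

lemma thales_posDef (z : E2) : (thales z).PosDef := by
  rw [Matrix.posDef_iff_dotProduct_mulVec]
  constructor
  · show (thales z).conjTranspose = thales z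
    ext i j
    fin_cases i <;> fin_cases j <;> rfl
  · intro v hv
    have hvv : v 0 ≠ 0 ∨ v 1 ≠ 0 := by
      by_contra hcon
      push_neg at hcon
      exact hv (funext fun i => by fin_cases i <;> simp [hcon.1, hcon.2])
    have hD := Dd_ne z
    have key : dotProduct (star v) ((thales z).mulVec v)
        = (v 0 ^ 2 + v 1 ^ 2 + (z 1 * v 0 - z 0 * v 1) ^ 2) / Dd z ^ 2 := by
      simp only [dotProduct, Matrix.mulVec, Fin.sum_univ_two, Pi.star_apply, star_trivial,
        thales00, thales01, thales10, thales11]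
      field_simp
      ring
    rw [key]
    apply div_pos _ (by positivity)
    rcases hvv with h | h
    · nlinarith [sq_nonneg (v 1), sq_nonneg (z 1 * v 0 - z 0 * v 1), sq_pos_of_ne_zero h]
    · nlinarith [sq_nonneg (v 0), sq_nonneg (z 1 * v 0 - z 0 * v 1), sq_pos_of_ne_zero h]

lemma coord_contDiff (i : Fin 2) : ContDiff ℝ (⊤ : ℕ∞) (fun z : E2 => z i) := (proj2 i).contDiff

lemma denom_contDiff : ContDiff ℝ (⊤ : ℕ∞) (fun z : E2 => (1 + z 0 ^ 2 + z 1 ^ 2) ^ 2) :=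
  ((contDiff_const.add ((coord_contDiff 0).pow 2)).add ((coord_contDiff 1).pow 2)).pow 2

lemma denom_ne (z : E2) : (1 + z 0 ^ 2 + z 1 ^ 2) ^ 2 ≠ 0 := by positivity

lemma thales_contDiff (a b : Fin 2) : ContDiff ℝ (⊤ : ℕ∞) (fun z => thales z a b) := by
  fin_cases a <;> fin_cases b
  · exact ContDiff.div (contDiff_const.add ((coord_contDiff 1).pow 2)) denom_contDiff denom_ne
  · exact ContDiff.div ((coord_contDiff 0).mul (coord_contDiff 1)).neg denom_contDiff denom_ne
  · exact ContDiff.div ((coord_contDiff 0).mul (coord_contDiff 1)).neg denom_contDiff denom_ne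
  · exact ContDiff.div (contDiff_const.add ((coord_contDiff 0).pow 2)) denom_contDiff denom_ne

/-- the Thales metric is a smooth Riemannian metric on all of ℝ²
(positive definite everywhere) with Gaussian curvature identically `1`. -/
theorem stmt_15 :
    (∀ a b : Fin 2, ContDiff ℝ (⊤ : ℕ∞) (fun z => thales z a b)) ∧
    (∀ z : E2, (thales z).PosDef) ∧
    (∀ z : E2, gauss thales z = 1) :=
  ⟨thales_contDiff, thales_posDef, gauss_eq_one⟩
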